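/- Let x'_1, …, x'_{n'} ∈ ℝ^p be nonzero vectors and y'_1, …, y'_{n'} ∈ ℝ, and define the 0/1 validation error E_v(β) = (1/n')·#{i : y'_i (x'_i{}^⊤β) < 0}. Let λ > 0 and μ > 0, suppose P_λ is μ-strongly convex (β ↦ P_λ(β) − (μ/2)‖β‖₂² is convex), and let β̂ be a minimizer of P_λ with P_λ(β̂) finite. Let β ∈ ℝ^p, θ ∈ ℝ^n with f*(−λθ) and Ω*(X^⊤θ) finite, and let ε_v ∈ [0, 1) with k := ⌊n'·ε_v⌋ < n'. Define ξ_i = ((x'_i{}^⊤β)/‖x'_i‖₂)² for i = 1, …, n', and let ξ_{(1)} ≤ ⋯ ≤ ξ_{(n')} be these values sorted in increasing order. If Gap_λ(β, θ) < (μ/2)·ξ_{(k+1)}, then |E_v(β̂) − E_v(β)| ≤ ε_v. -/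

import Mathlib

/-
Weak duality bounds `P(β) - P(β̂)` by the duality gap, and strong convexity at the minimizer gives
`(μ/2) ‖β - β̂‖² ≤ P(β) - P(β̂)`; hence `‖β - β̂‖² < ξ_(k+1)`. For every `i` with `ξ_i ≥ ξ_(k+1)`,
Cauchy–Schwarz gives `|⟪x'_i, β̂ - β⟫| ≤ ‖x'_i‖ ‖β - β̂‖ < |⟪x'_i, β⟫|`, so `⟪x'_i, β̂⟫` and
`⟪x'_i, β⟫` have the same sign. The two classifiers can therefore disagree only on the at most `k`
indices with `ξ_i < ξ_(k+1)`, and `k / n' ≤ ε_v`.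
-/

open scoped RealInnerProductSpace

noncomputable section

abbrev Vec (d : ℕ) := EuclideanSpace ℝ (Fin d)

/-- Matrix–vector product, landing in Euclidean space. -/
def mv {a b : ℕ} (M : Matrix (Fin a) (Fin b) ℝ) (v : Vec b) : Vec a := WithLp.toLp 2 (M.mulVec v)

/-- Fenchel conjugate of a real-valued function, with values in `EReal`. -/
noncomputable def rconj {d : ℕ} (f : Vec d → ℝ) (u : Vec d) : EReal :=
  ⨆ x, ((⟪u, x⟫ - f x : ℝ) : EReal)

/-- Fenchel conjugate of an `EReal`-valued function. -/
noncomputable def econj {d : ℕ} (g : Vec d → EReal) (u : Vec d) : EReal :=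
  ⨆ x, (((⟪u, x⟫ : ℝ) : EReal) - g x)

/-- Primal objective `P_λ(β) = f(Xβ) + λ Ω(β)`, with values in `EReal`. -/
noncomputable def Pfun {n p : ℕ} (X : Matrix (Fin n) (Fin p) ℝ)
    (f : Vec n → ℝ) (Ω : Vec p → EReal) (lam : ℝ) (b : Vec p) : EReal :=
  ((f (mv X b) : ℝ) : EReal) + ((lam : ℝ) : EReal) * Ω b

/-- Convexity of an `EReal`-valued function, via convex-combination inequalities. -/
def ECvx {d : ℕ} (g : Vec d → EReal) : Prop :=
  ∀ b1 b2 : Vec d, ∀ t : ℝ, 0 ≤ t → t ≤ 1 →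
    g (t • b1 + (1 - t) • b2) ≤
      ((t : ℝ) : EReal) * g b1 + (((1 - t) : ℝ) : EReal) * g b2

open Filter Topology

theorem Pfun_eq_coe {n p : ℕ} (X : Matrix (Fin n) (Fin p) ℝ) (f : Vec n → ℝ) {Ω : Vec p → EReal}
    (lam : ℝ) {b : Vec p} {w : ℝ} (hw : Ω b = w) :
    Pfun X f Ω lam b = ((f (mv X b) + lam * w : ℝ) : EReal) := by
  rw [Pfun, hw, ← EReal.coe_mul, ← EReal.coe_add]

theorem inner_mv_transpose {n p : ℕ} (X : Matrix (Fin n) (Fin p) ℝ) (θ : Vec n) (b : Vec p) :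
    ⟪mv X.transpose θ, b⟫ = ⟪θ, mv X b⟫ := by
  have h : ∀ {a c : ℕ} (M : Matrix (Fin a) (Fin c) ℝ) v, mv M v = Matrix.toEuclideanLin M v :=
    fun _ _ => rfl
  rw [h, h, ← Matrix.conjTranspose_eq_transpose_of_trivial,
    Matrix.toEuclideanLin_conjTranspose_eq_adjoint, LinearMap.adjoint_inner_left]

theorem norm_smul_add_one_sub_smul_sq {E : Type*} [NormedAddCommGroup E] [InnerProductSpace ℝ E]
    (a b : E) (t : ℝ) :
    ‖t • a + (1 - t) • b‖ ^ 2 = t * ‖a‖ ^ 2 + (1 - t) * ‖b‖ ^ 2 - t * (1 - t) * ‖a - b‖ ^ 2 := by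
  simp only [← real_inner_self_eq_norm_sq, inner_add_add_self, inner_sub_sub_self,
    real_inner_smul_left, real_inner_smul_right, real_inner_comm a b]
  ring

theorem inner_sub_le_rconj {d : ℕ} (f : Vec d → ℝ) (u x : Vec d) :
    ((⟪u, x⟫ - f x : ℝ) : EReal) ≤ rconj f u :=
  le_iSup (fun x => ((⟪u, x⟫ - f x : ℝ) : EReal)) x

theorem inner_sub_le_econj {d : ℕ} (g : Vec d → EReal) (u x : Vec d) :
    ((⟪u, x⟫ : ℝ) : EReal) - g x ≤ econj g u :=
  le_iSup (fun x => ((⟪u, x⟫ : ℝ) : EReal) - g x) x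

theorem ne_bot_of_econj_ne_top {d : ℕ} {g : Vec d → EReal} {u : Vec d} (h : econj g u ≠ ⊤)
    (x : Vec d) : g x ≠ ⊥ := by
  intro hx
  have := inner_sub_le_econj g u x
  rw [hx, EReal.coe_sub_bot, top_le_iff] at this
  exact h this

theorem neg_dual_le_primal {n p : ℕ} (X : Matrix (Fin n) (Fin p) ℝ) (f : Vec n → ℝ)
    (Ω : Vec p → EReal) {lam : ℝ} (hlam : 0 ≤ lam) {θ : Vec n} {fs Ωs : ℝ}
    (hfs : rconj f ((-lam) • θ) = fs) (hΩs : econj Ω (mv X.transpose θ) = Ωs)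
    {b : Vec p} {w : ℝ} (hw : Ω b = w) :
    -(fs + lam * Ωs) ≤ f (mv X b) + lam * w := by
  have hf := inner_sub_le_rconj f ((-lam) • θ) (mv X b)
  have hΩ := inner_sub_le_econj Ω (mv X.transpose θ) b
  rw [hfs, EReal.coe_le_coe_iff, real_inner_smul_left] at hf
  rw [hΩs, hw, ← EReal.coe_sub, EReal.coe_le_coe_iff, inner_mv_transpose] at hΩ
  nlinarith [mul_le_mul_of_nonneg_left hΩ hlam]

theorem mul_neg_iff_of_abs_sub_lt {a b : ℝ} (h : |b - a| < |a|) (y : ℝ) :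
    y * b < 0 ↔ y * a < 0 := by
  have hab : 0 < a * b := by nlinarith [sq_lt_sq.mpr h, sq_nonneg b]
  rcases mul_pos_iff.mp hab with ⟨ha, hb⟩ | ⟨ha, hb⟩ <;>
    simp [mul_neg_iff, ha, hb, ha.not_gt, hb.not_gt]

theorem abs_inner_sub_lt_of_sq_norm_sub_lt {E : Type*} [NormedAddCommGroup E]
    [InnerProductSpace ℝ E] {x u v : E} (h : ‖u - v‖ ^ 2 < (⟪x, u⟫ / ‖x‖) ^ 2) :
    |⟪x, v⟫ - ⟪x, u⟫| < |⟪x, u⟫| := by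
  have hx : 0 < ‖x‖ := by
    refine norm_pos_iff.mpr fun hx => ?_
    exact (sq_nonneg ‖u - v‖).not_gt (by simpa [hx] using h)
  rw [sq_lt_sq, abs_norm, abs_div, abs_norm, lt_div_iff₀ hx] at h
  calc |⟪x, v⟫ - ⟪x, u⟫| = |⟪x, v - u⟫| := by rw [inner_sub_right]
    _ ≤ ‖x‖ * ‖v - u‖ := abs_real_inner_le_norm x (v - u)
    _ < |⟪x, u⟫| := by rw [norm_sub_rev, mul_comm]; exact h

theorem ECvx.sq_norm_sub_le {d : ℕ} {g : Vec d → EReal} {μ : ℝ}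
    (hsc : ECvx fun b => g b - ((μ / 2 * ‖b‖ ^ 2 : ℝ) : EReal)) {bhat b : Vec d} {r s : ℝ}
    (hmin : ∀ x, g bhat ≤ g x) (hr : g bhat = r) (hs : g b = s) :
    μ / 2 * ‖b - bhat‖ ^ 2 ≤ s - r := by
  set c := μ / 2 * ‖b - bhat‖ ^ 2
  have key : ∀ t ∈ Set.Ioc (0 : ℝ) 1, (1 - t) * c ≤ s - r := by
    rintro t ⟨ht0, ht1⟩
    have h := hsc b bhat t ht0.le ht1
    simp only [hr, hs] at h
    rw [← EReal.coe_sub, ← EReal.coe_sub, ← EReal.coe_mul, ← EReal.coe_mul, ← EReal.coe_add,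
      EReal.sub_le_iff_le_add (.inl (EReal.coe_ne_bot _)) (.inl (EReal.coe_ne_top _)),
      ← EReal.coe_add] at h
    have h' := EReal.coe_le_coe_iff.mp ((hr ▸ hmin (t • b + (1 - t) • bhat)).trans h)
    rw [norm_smul_add_one_sub_smul_sq] at h'
    have : t * ((1 - t) * c) ≤ t * (s - r) := by linear_combination h'
    exact le_of_mul_le_mul_left this ht0
  have hlim : Tendsto (fun t : ℝ => (1 - t) * c) (𝓝[>] 0) (𝓝 c) := by
    have : Continuous fun t : ℝ => (1 - t) * c := by fun_prop
    simpa using (this.tendsto 0).mono_left nhdsWithin_le_nhds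
  exact le_of_tendsto hlim (eventually_of_mem (Ioc_mem_nhdsGT one_pos) key)

theorem natCard_le_natCard_add_natCard {ι : Type*} [Finite ι] {P Q R : ι → Prop}
    (h : ∀ i, ¬R i → (P i ↔ Q i)) :
    Nat.card {i // P i} ≤ Nat.card {i // R i} + Nat.card {i // Q i} := by
  change Nat.card {i | P i} ≤ Nat.card {i | R i} + Nat.card {i | Q i}
  simp only [Nat.card_coe_set_eq]
  calc _ ≤ ({i | P i} \ {i | Q i}).ncard + {i | Q i}.ncard :=
        Set.ncard_le_ncard_sdiff_add_ncard _ _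
    _ ≤ _ := Nat.add_le_add_right (Set.ncard_le_ncard fun i hi =>
        by_contra fun hr => hi.2 ((h i hr).1 hi.1)) _

theorem abs_natCard_sub_natCard_le {ι : Type*} [Finite ι] {P Q R : ι → Prop}
    (h : ∀ i, ¬R i → (P i ↔ Q i)) :
    |(Nat.card {i // P i} : ℝ) - Nat.card {i // Q i}| ≤ Nat.card {i // R i} := by
  have hPQ := natCard_le_natCard_add_natCard h
  have hQP := natCard_le_natCard_add_natCard fun i hi => (h i hi).symm
  rw [abs_sub_le_iff, sub_le_iff_le_add, sub_le_iff_le_add]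
  exact ⟨mod_cast hPQ, mod_cast hQP⟩

theorem natCard_lt_apply_le {m : ℕ} {ξ : Fin m → ℝ} {σ : Equiv.Perm (Fin m)}
    (hσ : Monotone (ξ ∘ σ)) (j : Fin m) : Nat.card {i // ξ i < ξ (σ j)} ≤ j := by
  calc Nat.card {i // ξ i < ξ (σ j)} = Nat.card {i // ξ (σ i) < ξ (σ j)} :=
        (Nat.card_congr (σ.subtypeEquiv fun _ => Iff.rfl)).symm
    _ ≤ Nat.card (Set.Iio j) :=
        Nat.card_mono (Set.toFinite _) fun i hi => lt_of_not_ge fun hji => (hσ hji).not_gt hi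
    _ = j := by simp

theorem stmt17_general {n p n' : ℕ} (X : Matrix (Fin n) (Fin p) ℝ)
    (x' : Fin n' → Vec p) (y' : Fin n' → ℝ)
    (f : Vec n → ℝ)
    (Ω : Vec p → EReal)
    (lam μ : ℝ) (hlam : 0 < lam) (hμ : 0 < μ)
    (hsc : ECvx fun b : Vec p =>
      Pfun X f Ω lam b - ((μ / 2 * ‖b‖ ^ 2 : ℝ) : EReal))
    (bhat : Vec p)
    (hmin : ∀ b, Pfun X f Ω lam bhat ≤ Pfun X f Ω lam b)
    (hfin : ∃ r : ℝ, Pfun X f Ω lam bhat = (r : EReal))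
    (Ev : Vec p → ℝ)
    (hEv : ∀ b, Ev b = (Nat.card {i : Fin n' // y' i * ⟪x' i, b⟫ < 0} : ℝ) / n')
    (β : Vec p) (θ : Vec n) (fs Ωs : ℝ)
    (hfs : rconj f ((-lam) • θ) = (fs : EReal))
    (hΩs : econj Ω (mv X.transpose θ) = (Ωs : EReal))
    (εv : ℝ) (hεv0 : 0 ≤ εv)
    (k : ℕ) (hkdef : k = (⌊(n' : ℝ) * εv⌋).toNat) (hk : k < n')
    (ξ : Fin n' → ℝ) (hξ : ∀ i, ξ i = (⟪x' i, β⟫ / ‖x' i‖) ^ 2)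
    (σ : Equiv.Perm (Fin n')) (hσ : Monotone fun i => ξ (σ i))
    (hGap : ((f (mv X β) : ℝ) : EReal) + ((fs : ℝ) : EReal)
        + ((lam : ℝ) : EReal) * (Ω β + ((Ωs : ℝ) : EReal))
      < ((μ / 2 * ξ (σ ⟨k, hk⟩) : ℝ) : EReal)) :
    |Ev bhat - Ev β| ≤ εv := by
  obtain ⟨r, hr⟩ := hfin
  have hΩ_ne_bot : ∀ b, Ω b ≠ ⊥ := ne_bot_of_econj_ne_top (hΩs ▸ EReal.coe_ne_top Ωs)
  obtain ⟨w, hw⟩ : ∃ w : ℝ, Ω β = w := by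
    refine ⟨(Ω β).toReal, (EReal.coe_toReal (fun htop => ?_) (hΩ_ne_bot β)).symm⟩
    rw [htop, EReal.top_add_coe, EReal.coe_mul_top_of_pos hlam, ← EReal.coe_add,
      EReal.coe_add_top] at hGap
    exact not_top_lt hGap
  obtain ⟨wh, hwh⟩ : ∃ w : ℝ, Ω bhat = w := by
    refine ⟨(Ω bhat).toReal, (EReal.coe_toReal (fun htop => ?_) (hΩ_ne_bot bhat)).symm⟩
    rw [Pfun, htop, EReal.coe_mul_top_of_pos hlam, EReal.coe_add_top] at hr
    exact EReal.top_ne_coe r hr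
  have hgrowth := hsc.sq_norm_sub_le hmin hr (Pfun_eq_coe X f lam hw)
  have hdual := neg_dual_le_primal X f Ω hlam.le hfs hΩs hwh
  rw [Pfun_eq_coe X f lam hwh, EReal.coe_eq_coe_iff] at hr
  rw [hw, ← EReal.coe_add, ← EReal.coe_add, ← EReal.coe_mul, ← EReal.coe_add,
    EReal.coe_lt_coe_iff] at hGap
  have hdist : ‖β - bhat‖ ^ 2 < ξ (σ ⟨k, hk⟩) :=
    lt_of_mul_lt_mul_left (by linarith) (half_pos hμ).le
  have hagree : ∀ i, ¬ξ i < ξ (σ ⟨k, hk⟩) →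
      (y' i * ⟪x' i, bhat⟫ < 0 ↔ y' i * ⟪x' i, β⟫ < 0) := fun i hi =>
    mul_neg_iff_of_abs_sub_lt (abs_inner_sub_lt_of_sq_norm_sub_lt
      (hξ i ▸ hdist.trans_le (not_lt.mp hi))) _
  have hcount := (abs_natCard_sub_natCard_le hagree).trans
    (Nat.cast_le.mpr (natCard_lt_apply_le hσ ⟨k, hk⟩))
  have hn' : (0 : ℝ) < n' := Nat.cast_pos.mpr (Nat.zero_lt_of_lt hk)
  have hk_le : (k : ℝ) ≤ n' * εv := by
    rw [hkdef, Int.floor_toNat]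
    exact Nat.floor_le (by positivity)
  rw [hEv, hEv, ← sub_div, abs_div, Nat.abs_cast, div_le_iff₀ hn']
  linarith

/-- safe bound on the classification (0/1) validation error.
`E_v(β) = (1/n') #{i : y'_i (x'_iᵀβ) < 0}`; `P_λ` is `μ`-strongly convex with
minimizer `β̂` (finite optimal value); `θ` is dual feasible; `ε_v ∈ [0,1)` with
`k = ⌊n' ε_v⌋ < n'`; `ξ_i = ((x'_iᵀβ)/‖x'_i‖₂)²` and `σ` sorts the `ξ_i` in
increasing order.  If `Gap_λ(β,θ) < (μ/2) ξ_{(k+1)}` then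
`|E_v(β̂) - E_v(β)| ≤ ε_v`. -/
theorem stmt17 {n p n' : ℕ} (X : Matrix (Fin n) (Fin p) ℝ)
    (x' : Fin n' → Vec p) (hx' : ∀ i, x' i ≠ 0) (y' : Fin n' → ℝ)
    (f : Vec n → ℝ) (hconv : ConvexOn ℝ Set.univ f)
    (Ω : Vec p → EReal)
    (lam μ : ℝ) (hlam : 0 < lam) (hμ : 0 < μ)
    (hsc : ECvx fun b : Vec p =>
      Pfun X f Ω lam b - ((μ / 2 * ‖b‖ ^ 2 : ℝ) : EReal))
    (bhat : Vec p)
    (hmin : ∀ b, Pfun X f Ω lam bhat ≤ Pfun X f Ω lam b)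
    (hfin : ∃ r : ℝ, Pfun X f Ω lam bhat = (r : EReal))
    (Ev : Vec p → ℝ)
    (hEv : ∀ b, Ev b = (Nat.card {i : Fin n' // y' i * ⟪x' i, b⟫ < 0} : ℝ) / n')
    (β : Vec p) (θ : Vec n) (fs Ωs : ℝ)
    (hfs : rconj f ((-lam) • θ) = (fs : EReal))
    (hΩs : econj Ω (mv X.transpose θ) = (Ωs : EReal))
    (εv : ℝ) (hεv0 : 0 ≤ εv) (hεv1 : εv < 1)
    (k : ℕ) (hkdef : k = (⌊(n' : ℝ) * εv⌋).toNat) (hk : k < n')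
    (ξ : Fin n' → ℝ) (hξ : ∀ i, ξ i = (⟪x' i, β⟫ / ‖x' i‖) ^ 2)
    (σ : Equiv.Perm (Fin n')) (hσ : Monotone fun i => ξ (σ i))
    (hGap : ((f (mv X β) : ℝ) : EReal) + ((fs : ℝ) : EReal)
        + ((lam : ℝ) : EReal) * (Ω β + ((Ωs : ℝ) : EReal))
      < ((μ / 2 * ξ (σ ⟨k, hk⟩) : ℝ) : EReal)) :
    |Ev bhat - Ev β| ≤ εv :=
  stmt17_general X x' y' f Ω lam μ hlam hμ hsc bhat hmin hfin Ev hEv β θ fs Ωs hfs hΩs εv hεv0 k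
    hkdef hk ξ hξ σ hσ hGap

end
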